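/- arXiv:1911.10163 — 3 statements merged into one kernel-verified Lean document; each statement's English description precedes it below -/
import Mathlib

section
/- Let M be a complex-valued continuous kernel on the triangle {(x,t) : 0 ≤ t ≤ x ≤ π}, λ ∈ ℂ, and n ≥ 1. Suppose G_n is a continuous function on the triangle with G_n(x,0) = 0 for all x ∈ [0,π], and suppose e_n(x,λ) = ∫₀ˣ G_n(x,t)·exp(−iλt) dt for all x ∈ [0,π]. Define e_{n+1}(x,λ) = i·∫₀ˣ exp(−iλ(x−t)) · (∫₀ᵗ M(t,τ)·e_n(τ,λ) dτ) dt. Then e_{n+1}(x,λ) = ∫₀ˣ G_{n+1}(x,t)·exp(−iλt) dt for all x ∈ [0,π], where G_{n+1}(x,t) = i·∫_{x−t}^{x} (∫_{t+s−x}^{s} M(s,τ)·G_n(τ, t+s−x) dτ) ds; moreover G_{n+1} is continuous on the triangle and G_{n+1}(x,0) = 0. -/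
/-!
`e_n` is the Volterra operator with kernel `G_n` applied to `exp (-iλ·)`. Applying the Volterra
operator of `M` to it gives the Volterra operator of the composed kernel `M ⋆ G_n`
(Fubini on a triangle). Convolving with `exp (-iλ(x - t))` and swapping once more, the reflection
`t ↦ x + u - t` turns `exp (-iλ(t - u)) exp (-iλu)` into `exp (-iλt)`; the kernel left in front
of it is `G_{n+1}`, after the substitution `s = x + u - t`. To integrate over rectangles,
`M` and `G_n` are first extended continuously from the triangle to the plane (Tietze).
-/

open Complex MeasureTheory Set Real

def Triangle : Set (ℝ × ℝ) := {p | 0 ≤ p.2 ∧ p.2 ≤ p.1 ∧ p.1 ≤ Real.pi}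

universe u v in
theorem ContinuousOn.exists_continuous_eqOn_of_isClosed {X : Type u} {Y : Type v}
    [TopologicalSpace X] [NormalSpace X] [TopologicalSpace Y] [TietzeExtension.{u, v} Y]
    {s : Set X} (hs : IsClosed s) {f : X → Y} (hf : ContinuousOn f s) :
    ∃ g : X → Y, Continuous g ∧ EqOn g f s := by
  obtain ⟨g, hg⟩ := ContinuousMap.exists_restrict_eq hs ⟨_, hf.domRestrict⟩
  exact ⟨g, g.continuous, fun x hx => ContinuousMap.congr_fun hg ⟨x, hx⟩⟩

open Function

namespace intervalIntegral

variable {X E : Type*} [TopologicalSpace X] [NormedAddCommGroup E] [NormedSpace ℝ E]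

theorem continuous_parametric_intervalIntegral_of_continuous_bounds {μ : Measure ℝ}
    [IsLocallyFiniteMeasure μ] [NullSingletonClass μ] {f : X → ℝ → E}
    (hf : Continuous (uncurry f)) {a b : X → ℝ} (ha : Continuous a) (hb : Continuous b) :
    Continuous fun x => ∫ t in a x..b x, f x t ∂μ := by
  have hint (x : X) (u v : ℝ) : IntervalIntegrable (f x) μ u v :=
    (hf.uncurry_left x).intervalIntegrable u v
  have hsplit (x : X) : ∫ t in a x..b x, f x t ∂μ =
      (∫ t in 0..b x, f x t ∂μ) - ∫ t in 0..a x, f x t ∂μ :=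
    (integral_interval_sub_left (hint x 0 _) (hint x 0 _)).symm
  simp_rw [hsplit]
  exact (continuous_parametric_intervalIntegral_of_continuous hf hb).sub
    (continuous_parametric_intervalIntegral_of_continuous hf ha)

theorem integral_integral_swap_triangle {f : ℝ → ℝ → E} (hf : Continuous (uncurry f))
    {a b : ℝ} (hab : a ≤ b) :
    ∫ t in a..b, ∫ u in a..t, f t u = ∫ u in a..b, ∫ t in u..b, f t u := by
  set K : ℝ × ℝ → E := {p : ℝ × ℝ | p.2 ≤ p.1}.indicator (uncurry f)
  have hK : Integrable K ((volume.restrict (Ioc a b)).prod (volume.restrict (Ioc a b))) := by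
    rw [Measure.prod_restrict, ← Measure.volume_eq_prod]
    refine IntegrableOn.indicator ?_ (measurableSet_le measurable_snd measurable_fst)
    refine (hf.integrableOn_Icc (a := (a, a)) (b := (b, b))).mono_set ?_
    rw [Icc_prod_eq]
    exact prod_mono Ioc_subset_Icc_self Ioc_subset_Icc_self
  have hleft :
      ∫ t in a..b, ∫ u in a..t, f t u = ∫ t in Ioc a b, ∫ u in Ioc a b, K (t, u) := by
    rw [integral_of_le hab]
    refine setIntegral_congr_fun measurableSet_Ioc fun t ht => ?_
    have : ∫ u in Ioc a b, K (t, u) = ∫ u in Ioc a b, (Iic t).indicator (f t) u :=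
      setIntegral_congr_fun measurableSet_Ioc fun u _ => by simp [K, indicator_apply]
    rw [this, setIntegral_indicator measurableSet_Iic, Ioc_inter_Iic, min_eq_right ht.2,
      integral_of_le ht.1.le]
  have hright :
      ∫ u in a..b, ∫ t in u..b, f t u = ∫ u in Ioc a b, ∫ t in Ioc a b, K (t, u) := by
    rw [integral_of_le hab]
    refine setIntegral_congr_fun measurableSet_Ioc fun u hu => ?_
    have : ∫ t in Ioc a b, K (t, u) = ∫ t in Ioc a b, (Ici u).indicator (f · u) t :=
      setIntegral_congr_fun measurableSet_Ioc fun t _ => by simp [K, indicator_apply]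
    have hset : Ioc a b ∩ Ici u = Icc u b := by
      ext t
      simp only [mem_inter_iff, mem_Ioc, mem_Ici, mem_Icc]
      exact ⟨fun h => ⟨h.2, h.1.2⟩, fun h => ⟨⟨hu.1.trans_le h.1, h.2⟩, h.1⟩⟩
    rw [this, setIntegral_indicator measurableSet_Ici, hset, integral_Icc_eq_integral_Ioc,
      integral_of_le hu.2]
  rw [hleft, hright]
  exact integral_integral_swap hK

end intervalIntegral

theorem integral_diagonal_substitution (g : ℝ → ℝ → ℂ) (x t : ℝ) :
    ∫ s in (x - t)..x, g s (t + s - x) = ∫ u in 0..t, g (x + u - t) u := by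
  have h := intervalIntegral.integral_comp_add_right (fun s => g s (t + s - x))
    (a := 0) (b := t) (x - t)
  simp only [zero_add, add_sub_cancel] at h
  rw [← h]
  congr 1 with u
  ring_nf

theorem integral_cexp_mul_integral_cexp (c : ℂ) {g : ℝ → ℝ → ℂ}
    (hg : Continuous (uncurry g)) {x : ℝ} (hx : 0 ≤ x) :
    ∫ t in 0..x, cexp (c * (x - t)) * ∫ u in 0..t, g t u * cexp (c * u) =
      ∫ t in 0..x, (∫ u in 0..t, g (x + u - t) u) * cexp (c * t) := calc
  _ = ∫ t in 0..x, ∫ u in 0..t, cexp (c * (x - t)) * (g t u * cexp (c * u)) := by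
    simp only [intervalIntegral.integral_const_mul]
  _ = ∫ u in 0..x, ∫ t in u..x, cexp (c * (x - t)) * (g t u * cexp (c * u)) :=
    intervalIntegral.integral_integral_swap_triangle (by fun_prop) hx
  _ = ∫ u in 0..x, ∫ t in u..x, g (x + u - t) u * cexp (c * t) := by
    congr 1 with u
    -- reflect `t ↦ x + u - t`; then `exp (c (t - u)) * exp (c u) = exp (c t)`
    have h := intervalIntegral.integral_comp_sub_left
      (fun t => g (x + u - t) u * cexp (c * t)) (a := u) (b := x) (x + u)
    simp only [add_sub_cancel_left, add_sub_cancel_right] at h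
    rw [← h]
    congr 1 with t
    rw [sub_sub_cancel, mul_left_comm, ← Complex.exp_add]
    push_cast
    ring_nf
  _ = ∫ t in 0..x, (∫ u in 0..t, g (x + u - t) u) * cexp (c * t) := by
    rw [← intervalIntegral.integral_integral_swap_triangle
      (f := fun t u => g (x + u - t) u * cexp (c * t)) (by fun_prop) hx]
    simp only [intervalIntegral.integral_mul_const]

noncomputable def volterraOp (K : ℝ → ℝ → ℂ) (f : ℝ → ℂ) (t : ℝ) : ℂ :=
  ∫ u in 0..t, K t u * f u

noncomputable def volterraComp (M G : ℝ → ℝ → ℂ) (t u : ℝ) : ℂ :=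
  ∫ τ in u..t, M t τ * G τ u

-- `G_{n+1}` of the successive approximations, for `G = G_n`
noncomputable def volterraStepKernel (M G : ℝ → ℝ → ℂ) (x t : ℝ) : ℂ :=
  I * ∫ s in (x - t)..x, volterraComp M G s (t + s - x)

section Continuous

variable {M G : ℝ → ℝ → ℂ}

theorem continuous_volterraComp (hM : Continuous (uncurry M)) (hG : Continuous (uncurry G)) :
    Continuous (uncurry (volterraComp M G)) :=
  show Continuous fun p : ℝ × ℝ => ∫ τ in p.2..p.1, M p.1 τ * G τ p.2 from
    intervalIntegral.continuous_parametric_intervalIntegral_of_continuous_bounds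
      (f := fun p τ => M p.1 τ * G τ p.2) (by fun_prop) continuous_snd continuous_fst

theorem continuous_volterraStepKernel (hM : Continuous (uncurry M))
    (hG : Continuous (uncurry G)) : Continuous (uncurry (volterraStepKernel M G)) :=
  have := continuous_volterraComp hM hG
  continuous_const.mul <|
    intervalIntegral.continuous_parametric_intervalIntegral_of_continuous_bounds
      (f := fun (p : ℝ × ℝ) s => volterraComp M G s (p.2 + s - p.1))
      (by fun_prop) (by fun_prop) continuous_fst

theorem volterraOp_volterraOp (hM : Continuous (uncurry M)) (hG : Continuous (uncurry G))
    {f : ℝ → ℂ} (hf : Continuous f) {t : ℝ} (ht : 0 ≤ t) :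
    volterraOp M (volterraOp G f) t = volterraOp (volterraComp M G) f t := calc
  _ = ∫ τ in 0..t, ∫ u in 0..τ, M t τ * (G τ u * f u) := by
    simp only [volterraOp, intervalIntegral.integral_const_mul]
  _ = ∫ u in 0..t, ∫ τ in u..t, M t τ * (G τ u * f u) :=
    intervalIntegral.integral_integral_swap_triangle (by fun_prop) ht
  _ = volterraOp (volterraComp M G) f t := by
    simp only [volterraOp, volterraComp, ← intervalIntegral.integral_mul_const, mul_assoc]

theorem mul_integral_cexp_mul_volterraOp_volterraOp (hM : Continuous (uncurry M))
    (hG : Continuous (uncurry G)) (c : ℂ) {x : ℝ} (hx : 0 ≤ x) :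
    I * ∫ t in 0..x, cexp (c * (x - t)) * volterraOp M (volterraOp G fun u => cexp (c * u)) t =
      ∫ t in 0..x, volterraStepKernel M G x t * cexp (c * t) := by
  have hcomp : ∀ t ∈ uIcc 0 x,
      cexp (c * (x - t)) * volterraOp M (volterraOp G fun u => cexp (c * u)) t =
        cexp (c * (x - t)) * volterraOp (volterraComp M G) (fun u => cexp (c * u)) t :=
    fun t ht => by rw [volterraOp_volterraOp hM hG (by fun_prop) (uIcc_of_le hx ▸ ht).1]
  rw [intervalIntegral.integral_congr hcomp]
  simp only [volterraOp, volterraStepKernel, mul_assoc,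
    integral_cexp_mul_integral_cexp c (continuous_volterraComp hM hG) hx,
    integral_diagonal_substitution, intervalIntegral.integral_const_mul]

end Continuous

theorem isClosed_triangle : IsClosed Triangle :=
  (isClosed_le continuous_const continuous_snd).inter <|
    (isClosed_le continuous_snd continuous_fst).inter (isClosed_le continuous_fst continuous_const)

theorem exists_continuous_uncurry_eqOn_triangle {K : ℝ → ℝ → ℂ}
    (hK : ContinuousOn (uncurry K) Triangle) :
    ∃ K' : ℝ → ℝ → ℂ,
      Continuous (uncurry K') ∧ EqOn (uncurry K') (uncurry K) Triangle := by
  obtain ⟨g, hg, hgK⟩ := hK.exists_continuous_eqOn_of_isClosed isClosed_triangle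
  exact ⟨curry g, by rwa [uncurry_curry], by rwa [uncurry_curry]⟩

section Congr

variable {M M' G G' : ℝ → ℝ → ℂ}

theorem volterraOp_congr_triangle (hM : EqOn (uncurry M') (uncurry M) Triangle)
    {f f' : ℝ → ℂ} {t : ℝ} (hf : EqOn f' f (Icc 0 t)) (ht : t ∈ Icc 0 π) :
    volterraOp M' f' t = volterraOp M f t := by
  refine intervalIntegral.integral_congr fun τ hτ => ?_
  rw [uIcc_of_le ht.1] at hτ
  exact congrArg₂ (· * ·) (@hM (t, τ) ⟨hτ.1, hτ.2, ht.2⟩) (hf hτ)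

theorem volterraComp_congr_triangle (hM : EqOn (uncurry M') (uncurry M) Triangle)
    (hG : EqOn (uncurry G') (uncurry G) Triangle) {t u : ℝ} (h : (t, u) ∈ Triangle) :
    volterraComp M' G' t u = volterraComp M G t u := by
  obtain ⟨hu, hut, ht⟩ := h
  refine intervalIntegral.integral_congr fun τ hτ => ?_
  rw [uIcc_of_le hut] at hτ
  exact congrArg₂ (· * ·) (@hM (t, τ) ⟨hu.trans hτ.1, hτ.2, ht⟩)
    (@hG (τ, u) ⟨hu, hτ.1, hτ.2.trans ht⟩)

theorem volterraStepKernel_eqOn_triangle (hM : EqOn (uncurry M') (uncurry M) Triangle)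
    (hG : EqOn (uncurry G') (uncurry G) Triangle) :
    EqOn (uncurry (volterraStepKernel M' G')) (uncurry (volterraStepKernel M G)) Triangle := by
  rintro ⟨x, t⟩ ⟨ht, htx, hx⟩
  refine congrArg (I * ·) (intervalIntegral.integral_congr fun s hs => ?_)
  rw [uIcc_of_le (by linarith)] at hs
  exact volterraComp_congr_triangle hM hG ⟨by linarith [hs.1], by linarith, hs.2.trans hx⟩

end Congr

theorem stmt_3_general (M : ℝ → ℝ → ℂ)
    (hM : ContinuousOn (fun p : ℝ × ℝ => M p.1 p.2) Triangle)
    (lam : ℂ)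
    (Gn : ℝ → ℝ → ℂ)
    (hGn : ContinuousOn (fun p : ℝ × ℝ => Gn p.1 p.2) Triangle)
    (en : ℝ → ℂ)
    (hen : ∀ x ∈ Icc (0:ℝ) Real.pi,
      en x = ∫ t in (0:ℝ)..x, Gn x t * Complex.exp (-Complex.I * lam * t)) :
    (∀ x ∈ Icc (0:ℝ) Real.pi,
      (Complex.I * ∫ t in (0:ℝ)..x,
          Complex.exp (-Complex.I * lam * (x - t))
            * ∫ τ in (0:ℝ)..t, M t τ * en τ)
      = ∫ t in (0:ℝ)..x,
          (Complex.I * ∫ s in (x - t)..x,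
              ∫ τ in (t + s - x)..s, M s τ * Gn τ (t + s - x))
            * Complex.exp (-Complex.I * lam * t)) ∧
    ContinuousOn
      (fun p : ℝ × ℝ => Complex.I * ∫ s in (p.1 - p.2)..p.1,
          ∫ τ in (p.2 + s - p.1)..s, M s τ * Gn τ (p.2 + s - p.1))
      Triangle ∧
    (∀ x ∈ Icc (0:ℝ) Real.pi,
      (Complex.I * ∫ s in (x - 0)..x,
          ∫ τ in (0 + s - x)..s, M s τ * Gn τ (0 + s - x)) = 0) := by
  obtain ⟨M', hM'c, hM'⟩ := exists_continuous_uncurry_eqOn_triangle hM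
  obtain ⟨G', hG'c, hG'⟩ := exists_continuous_uncurry_eqOn_triangle hGn
  have hnext := volterraStepKernel_eqOn_triangle hM' hG'
  refine ⟨fun x hx => ?_,
    (continuous_volterraStepKernel hM'c hG'c).continuousOn.congr hnext.symm, fun x _ => by simp⟩
  have hen' : ∀ t ∈ uIcc 0 x, volterraOp M en t =
      volterraOp M' (volterraOp G' fun u => cexp (-I * lam * u)) t := by
    intro t ht
    rw [uIcc_of_le hx.1] at ht
    refine (volterraOp_congr_triangle hM' (fun τ hτ => ?_) ⟨ht.1, ht.2.trans hx.2⟩).symm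
    have hτ' : τ ∈ Icc 0 π := ⟨hτ.1, hτ.2.trans (ht.2.trans hx.2)⟩
    exact (volterraOp_congr_triangle hG' (fun _ _ => rfl) hτ').trans (hen τ hτ').symm
  calc _ = I * ∫ t in 0..x, cexp (-I * lam * (x - t)) *
          volterraOp M' (volterraOp G' fun u => cexp (-I * lam * u)) t :=
        congrArg (I * ·) <| intervalIntegral.integral_congr fun t ht =>
          congrArg (_ * ·) (hen' t ht)
    _ = ∫ t in 0..x, volterraStepKernel M' G' x t * cexp (-I * lam * t) :=
        mul_integral_cexp_mul_volterraOp_volterraOp hM'c hG'c _ hx.1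
    _ = _ := intervalIntegral.integral_congr fun t ht => by
        rw [uIcc_of_le hx.1] at ht
        exact congrArg (· * _) (@hnext (x, t) ⟨ht.1, ht.2, hx.2⟩)

/-- The induction step for the successive approximations: if
`eₙ(x,λ) = ∫₀ˣ Gₙ(x,t) exp(−iλt) dt` with `Gₙ` continuous on the triangle and
`Gₙ(x,0) = 0`, then `e_{n+1}(x,λ) = ∫₀ˣ G_{n+1}(x,t) exp(−iλt) dt`, where
`G_{n+1}(x,t) = i ∫_{x−t}^{x} ∫_{t+s−x}^{s} M(s,τ) Gₙ(τ, t+s−x) dτ ds` is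
continuous on the triangle and `G_{n+1}(x,0) = 0`. -/
theorem stmt_3 (M : ℝ → ℝ → ℂ)
    (hM : ContinuousOn (fun p : ℝ × ℝ => M p.1 p.2) Triangle)
    (lam : ℂ) (n : ℕ) (hn : 1 ≤ n)
    (Gn : ℝ → ℝ → ℂ)
    (hGn : ContinuousOn (fun p : ℝ × ℝ => Gn p.1 p.2) Triangle)
    (hGn0 : ∀ x ∈ Icc (0:ℝ) Real.pi, Gn x 0 = 0)
    (en : ℝ → ℂ)
    (hen : ∀ x ∈ Icc (0:ℝ) Real.pi,
      en x = ∫ t in (0:ℝ)..x, Gn x t * Complex.exp (-Complex.I * lam * t)) :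
    (∀ x ∈ Icc (0:ℝ) Real.pi,
      (Complex.I * ∫ t in (0:ℝ)..x,
          Complex.exp (-Complex.I * lam * (x - t))
            * ∫ τ in (0:ℝ)..t, M t τ * en τ)
      = ∫ t in (0:ℝ)..x,
          (Complex.I * ∫ s in (x - t)..x,
              ∫ τ in (t + s - x)..s, M s τ * Gn τ (t + s - x))
            * Complex.exp (-Complex.I * lam * t)) ∧
    ContinuousOn
      (fun p : ℝ × ℝ => Complex.I * ∫ s in (p.1 - p.2)..p.1,
          ∫ τ in (p.2 + s - p.1)..s, M s τ * Gn τ (p.2 + s - p.1))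
      Triangle ∧
    (∀ x ∈ Icc (0:ℝ) Real.pi,
      (Complex.I * ∫ s in (x - 0)..x,
          ∫ τ in (0 + s - x)..s, M s τ * Gn τ (0 + s - x)) = 0) :=
  stmt_3_general M hM lam Gn hGn en hen
end

section
/- Let M and M̃ be complex-valued continuous kernels on the triangle {(x,t) : 0 ≤ t ≤ x ≤ π} and λ ∈ ℂ. Let ψ : [0,π] → ℂ be differentiable and satisfy the adjoint equation (13): −i·ψ'(x) + ∫ₓ^π M(t,x)·ψ(t) dt = λ·ψ(x) for x ∈ [0,π], with ψ(π) = 1; let ẽ : [0,π] → ℂ be differentiable and satisfy i·ẽ'(x) + ∫₀ˣ M̃(x,t)·ẽ(t) dt = λ·ẽ(x) for x ∈ [0,π], with ẽ(0) = 1. Then ∫₀^π ψ(x) · (∫₀ˣ (M(x,t) − M̃(x,t))·ẽ(t) dt) dx = i·(ẽ(π) − ψ(0)). -/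
open Complex MeasureTheory Set Real

open Function

universe u v

/-!
Write `V e (x) = ∫ₐˣ K(x,t) e(t) dt` and `V* ψ (x) = ∫ₓᵇ K(t,x) ψ(t) dt`. By Fubini on the
triangle `a ≤ t ≤ x ≤ b`, `V*` is the adjoint of `V`, so the Lagrange identity
`∫ (ψ · (i e' + V e) − (−i ψ' + V* ψ) · e) = i ∫ (ψ e)' = i (ψ(b) e(b) − ψ(a) e(a))`
holds for all `C¹` functions `ψ, e`. Take `K = M`: then `−i ψ' + V* ψ = λ ψ`, while the equation
for `ẽ` gives `i ẽ' + V ẽ = λ ẽ + ∫₀ˣ (M − M̃) ẽ`, so the integrand reduces to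
`ψ · ∫₀ˣ (M − M̃) ẽ`. The derivatives are continuous because the equations express them through
continuous Volterra integrals.
-/

theorem ContinuousOn.exists_continuous_eqOn {X : Type u} {Y : Type v} [TopologicalSpace X]
    [NormalSpace X] [TopologicalSpace Y] [TietzeExtension.{u, v} Y] {s : Set X} {f : X → Y}
    (hs : IsClosed s) (hf : ContinuousOn f s) : ∃ g : X → Y, Continuous g ∧ EqOn g f s := by
  obtain ⟨g, hg⟩ := ContinuousMap.exists_restrict_eq hs ⟨s.domRestrict f, hf.domRestrict⟩
  exact ⟨g, g.continuous, fun x hx => ContinuousMap.congr_fun hg ⟨x, hx⟩⟩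

def lowerTriangle (a b : ℝ) : Set (ℝ × ℝ) := {p | a ≤ p.2 ∧ p.2 ≤ p.1 ∧ p.1 ≤ b}

section lowerTriangle

variable {a b : ℝ}

theorem isClosed_lowerTriangle (a b : ℝ) : IsClosed (lowerTriangle a b) :=
  (isClosed_le continuous_const continuous_snd).inter
    ((isClosed_le continuous_snd continuous_fst).inter
      (isClosed_le continuous_fst continuous_const))

theorem lowerTriangle_subset_Icc_prod (a b : ℝ) : lowerTriangle a b ⊆ Icc a b ×ˢ Icc a b :=
  fun _ ⟨h₁, h₂, h₃⟩ => ⟨⟨h₁.trans h₂, h₃⟩, ⟨h₁, h₂.trans h₃⟩⟩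

theorem isCompact_lowerTriangle (a b : ℝ) : IsCompact (lowerTriangle a b) :=
  (isCompact_Icc.prod isCompact_Icc).of_isClosed_subset (isClosed_lowerTriangle a b)
    (lowerTriangle_subset_Icc_prod a b)

theorem mapsTo_fst_lowerTriangle (a b : ℝ) : MapsTo Prod.fst (lowerTriangle a b) (Icc a b) :=
  fun _ hp => (lowerTriangle_subset_Icc_prod a b hp).1

theorem mapsTo_snd_lowerTriangle (a b : ℝ) : MapsTo Prod.snd (lowerTriangle a b) (Icc a b) :=
  fun _ hp => (lowerTriangle_subset_Icc_prod a b hp).2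

variable {E : Type*} [NormedAddCommGroup E]

theorem intervalIntegrable_of_continuousOn_lowerTriangle {f : ℝ → ℝ → E}
    (hf : ContinuousOn (uncurry f) (lowerTriangle a b)) {x : ℝ} (hx : x ∈ Icc a b) :
    IntervalIntegrable (f x) volume a x := by
  refine ContinuousOn.intervalIntegrable ?_
  rw [uIcc_of_le hx.1]
  exact hf.comp (continuousOn_const.prodMk continuousOn_id) fun t ht => ⟨ht.1, ht.2, hx.2⟩

variable [NormedSpace ℝ E]

theorem integral_indicator_lowerTriangle_row (f : ℝ → ℝ → E) (x : ℝ) :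
    ∫ t, (lowerTriangle a b).indicator (uncurry f) (x, t)
      = (Icc a b).indicator (fun x => ∫ t in a..x, f x t) x := by
  by_cases hx : x ∈ Icc a b
  · have hrow : (fun t => (lowerTriangle a b).indicator (uncurry f) (x, t))
        = (Icc a x).indicator (f x) := by
      ext t
      simp only [indicator, lowerTriangle, mem_Icc, uncurry_apply_pair]
      congr 1
      exact propext ⟨fun h => ⟨h.1, h.2.1⟩, fun h => ⟨h.1, h.2, hx.2⟩⟩
    rw [indicator_of_mem hx, hrow, integral_indicator measurableSet_Icc,
      integral_Icc_eq_integral_Ioc, intervalIntegral.integral_of_le hx.1]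
  · rw [indicator_of_notMem hx]
    refine integral_eq_zero_of_ae (ae_of_all _ fun t => indicator_of_notMem ?_ _)
    exact fun ht => hx (mapsTo_fst_lowerTriangle a b ht)

theorem integral_indicator_lowerTriangle_column (f : ℝ → ℝ → E) (t : ℝ) :
    ∫ x, (lowerTriangle a b).indicator (uncurry f) (x, t)
      = (Icc a b).indicator (fun t => ∫ x in t..b, f x t) t := by
  by_cases ht : t ∈ Icc a b
  · have hcol : (fun x => (lowerTriangle a b).indicator (uncurry f) (x, t))
        = (Icc t b).indicator (fun x => f x t) := by
      ext x
      simp only [indicator, lowerTriangle, mem_Icc, uncurry_apply_pair]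
      congr 1
      exact propext ⟨fun h => h.2, fun h => ⟨ht.1, h⟩⟩
    rw [indicator_of_mem ht, hcol, integral_indicator measurableSet_Icc,
      integral_Icc_eq_integral_Ioc, intervalIntegral.integral_of_le ht.2]
  · rw [indicator_of_notMem ht]
    refine integral_eq_zero_of_ae (ae_of_all _ fun x => indicator_of_notMem ?_ _)
    exact fun hx => ht (mapsTo_snd_lowerTriangle a b hx)

theorem integral_integral_lowerTriangle_swap (hab : a ≤ b) {f : ℝ → ℝ → E}
    (hf : IntegrableOn (uncurry f) (lowerTriangle a b)) :
    ∫ x in a..b, ∫ t in a..x, f x t = ∫ t in a..b, ∫ x in t..b, f x t := by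
  have hF : Integrable ((lowerTriangle a b).indicator (uncurry f)) (volume.prod volume) :=
    (integrable_indicator_iff (isClosed_lowerTriangle a b).measurableSet).2 hf
  have hIcc {g : ℝ → E} : ∫ x in a..b, g x = ∫ x, (Icc a b).indicator g x := by
    rw [integral_indicator measurableSet_Icc, integral_Icc_eq_integral_Ioc,
      intervalIntegral.integral_of_le hab]
  simp only [hIcc, ← integral_indicator_lowerTriangle_row,
    ← integral_indicator_lowerTriangle_column]
  exact integral_integral_swap hF

variable [TietzeExtension.{0, _} E]

theorem continuousOn_intervalIntegral_lowerTriangle_row {f : ℝ → ℝ → E}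
    (hf : ContinuousOn (uncurry f) (lowerTriangle a b)) :
    ContinuousOn (fun x => ∫ t in a..x, f x t) (Icc a b) := by
  obtain ⟨F, hFc, hF⟩ := hf.exists_continuous_eqOn (isClosed_lowerTriangle a b)
  have hcont : Continuous fun x => ∫ t in a..x, F (x, t) :=
    intervalIntegral.continuous_parametric_intervalIntegral_of_continuous (f := curry F)
      (by rwa [uncurry_curry]) continuous_id
  refine hcont.continuousOn.congr fun x hx => intervalIntegral.integral_congr fun t ht => ?_
  rw [uIcc_of_le hx.1] at ht
  exact (@hF (x, t) ⟨ht.1, ht.2, hx.2⟩).symm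

theorem continuousOn_intervalIntegral_lowerTriangle_column {f : ℝ → ℝ → E}
    (hf : ContinuousOn (uncurry f) (lowerTriangle a b)) :
    ContinuousOn (fun x => ∫ t in x..b, f t x) (Icc a b) := by
  obtain ⟨F, hFc, hF⟩ := hf.exists_continuous_eqOn (isClosed_lowerTriangle a b)
  have hint (x c d : ℝ) : IntervalIntegrable (fun t => F (t, x)) volume c d :=
    (by fun_prop : Continuous fun t => F (t, x)).intervalIntegrable c d
  have hcont : Continuous fun x => ∫ t in x..b, F (t, x) := by
    have hsplit : (fun x => ∫ t in x..b, F (t, x))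
        = fun x => (∫ t in a..b, F (t, x)) - ∫ t in a..x, F (t, x) :=
      funext fun x => (intervalIntegral.integral_interval_sub_left (hint x a b) (hint x a x)).symm
    rw [hsplit]
    exact (intervalIntegral.continuous_parametric_intervalIntegral_of_continuous'
      (f := fun x t => F (t, x)) (by fun_prop) a b).sub
      (intervalIntegral.continuous_parametric_intervalIntegral_of_continuous
      (f := fun x t => F (t, x)) (by fun_prop) continuous_id)
  refine hcont.continuousOn.congr fun x hx => intervalIntegral.integral_congr fun t ht => ?_
  rw [uIcc_of_le hx.2] at ht
  exact (@hF (t, x) ⟨hx.1, ht.1, ht.2⟩).symm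

end lowerTriangle

section Volterra

variable {a b : ℝ} {K : ℝ → ℝ → ℂ}

theorem ContinuousOn.uncurry_mul_snd (hK : ContinuousOn (uncurry K) (lowerTriangle a b))
    {f : ℝ → ℂ} (hf : ContinuousOn f (Icc a b)) :
    ContinuousOn (uncurry fun x t => K x t * f t) (lowerTriangle a b) :=
  hK.mul (hf.comp continuousOn_snd (mapsTo_snd_lowerTriangle a b))

theorem ContinuousOn.uncurry_mul_fst (hK : ContinuousOn (uncurry K) (lowerTriangle a b))
    {f : ℝ → ℂ} (hf : ContinuousOn f (Icc a b)) :
    ContinuousOn (uncurry fun x t => K x t * f x) (lowerTriangle a b) :=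
  hK.mul (hf.comp continuousOn_fst (mapsTo_fst_lowerTriangle a b))

theorem continuousOn_deriv_of_volterra (hK : ContinuousOn (uncurry K) (lowerTriangle a b))
    {lam : ℂ} {e e' : ℝ → ℂ} (he : ContinuousOn e (Icc a b))
    (heq : ∀ x ∈ Icc a b, I * e' x + ∫ t in a..x, K x t * e t = lam * e x) :
    ContinuousOn e' (Icc a b) := by
  have hcont : ContinuousOn (fun x => -I * (lam * e x - ∫ t in a..x, K x t * e t)) (Icc a b) :=
    continuousOn_const.mul ((continuousOn_const.mul he).sub
      (continuousOn_intervalIntegral_lowerTriangle_row (hK.uncurry_mul_snd he)))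
  refine hcont.congr fun x hx => ?_
  linear_combination (-I) * heq x hx + e' x * I_sq

theorem continuousOn_deriv_of_adjoint_volterra
    (hK : ContinuousOn (uncurry K) (lowerTriangle a b))
    {lam : ℂ} {ψ ψ' : ℝ → ℂ} (hψ : ContinuousOn ψ (Icc a b))
    (heq : ∀ x ∈ Icc a b, -(I * ψ' x) + ∫ t in x..b, K t x * ψ t = lam * ψ x) :
    ContinuousOn ψ' (Icc a b) := by
  have hcont : ContinuousOn (fun x => I * (lam * ψ x - ∫ t in x..b, K t x * ψ t)) (Icc a b) :=
    continuousOn_const.mul ((continuousOn_const.mul hψ).sub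
      (continuousOn_intervalIntegral_lowerTriangle_column (hK.uncurry_mul_fst hψ)))
  refine hcont.congr fun x hx => ?_
  linear_combination I * heq x hx + ψ' x * I_sq

theorem integral_mul_volterra_eq_integral_adjoint_mul (hab : a ≤ b)
    (hK : ContinuousOn (uncurry K) (lowerTriangle a b)) {ψ e : ℝ → ℂ}
    (hψ : ContinuousOn ψ (Icc a b)) (he : ContinuousOn e (Icc a b)) :
    ∫ x in a..b, ψ x * ∫ t in a..x, K x t * e t
      = ∫ x in a..b, (∫ t in x..b, K t x * ψ t) * e x := by
  have hint : IntegrableOn (uncurry fun x t => ψ x * (K x t * e t)) (lowerTriangle a b) :=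
    ((hψ.comp continuousOn_fst (mapsTo_fst_lowerTriangle a b)).mul
      (hK.uncurry_mul_snd he)).integrableOn_compact (isCompact_lowerTriangle a b)
  simp_rw [← intervalIntegral.integral_const_mul, ← intervalIntegral.integral_mul_const]
  rw [integral_integral_lowerTriangle_swap hab hint]
  exact intervalIntegral.integral_congr fun t _ =>
    intervalIntegral.integral_congr fun x _ => by ring

theorem lagrange_identity_volterra (hab : a ≤ b)
    (hK : ContinuousOn (uncurry K) (lowerTriangle a b)) {ψ ψ' e e' : ℝ → ℂ}
    (hψ : ∀ x ∈ Icc a b, HasDerivWithinAt ψ (ψ' x) (Icc a b) x) (hψ' : ContinuousOn ψ' (Icc a b))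
    (he : ∀ x ∈ Icc a b, HasDerivWithinAt e (e' x) (Icc a b) x) (he' : ContinuousOn e' (Icc a b)) :
    ∫ x in a..b, (ψ x * (I * e' x + ∫ t in a..x, K x t * e t)
        - (-(I * ψ' x) + ∫ t in x..b, K t x * ψ t) * e x)
      = I * (ψ b * e b - ψ a * e a) := by
  have hψc : ContinuousOn ψ (Icc a b) := fun x hx => (hψ x hx).continuousWithinAt
  have hec : ContinuousOn e (Icc a b) := fun x hx => (he x hx).continuousWithinAt
  have hV := continuousOn_intervalIntegral_lowerTriangle_row (hK.uncurry_mul_snd hec)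
  have hV' := continuousOn_intervalIntegral_lowerTriangle_column (hK.uncurry_mul_fst hψc)
  have hftc : ∫ x in a..b, (ψ' x * e x + ψ x * e' x) = ψ b * e b - ψ a * e a := by
    refine intervalIntegral.integral_eq_sub_of_hasDeriv_right_of_le hab (hψc.mul hec)
      (fun x hx => ?_) (((hψ'.mul hec).add (hψc.mul he')).intervalIntegrable_of_Icc hab)
    have hnhds := Icc_mem_nhds hx.1 hx.2
    exact (((hψ x (Ioo_subset_Icc_self hx)).hasDerivAt hnhds).mul
      ((he x (Ioo_subset_Icc_self hx)).hasDerivAt hnhds)).hasDerivWithinAt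
  calc _ = ∫ x in a..b, (I * (ψ' x * e x + ψ x * e' x)
          + (ψ x * (∫ t in a..x, K x t * e t) - (∫ t in x..b, K t x * ψ t) * e x)) :=
        intervalIntegral.integral_congr fun x _ => by ring
    _ = I * (∫ x in a..b, (ψ' x * e x + ψ x * e' x))
          + ((∫ x in a..b, ψ x * ∫ t in a..x, K x t * e t)
            - ∫ x in a..b, (∫ t in x..b, K t x * ψ t) * e x) := by
        rw [intervalIntegral.integral_add, intervalIntegral.integral_const_mul,
          intervalIntegral.integral_sub]
        all_goals exact ContinuousOn.intervalIntegrable_of_Icc hab (by fun_prop)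
    _ = I * (ψ b * e b - ψ a * e a) := by
        rw [hftc, integral_mul_volterra_eq_integral_adjoint_mul hab hK hψc hec, sub_self, add_zero]

end Volterra

/-- If `ψ` solves the adjoint equation (13) with kernel `M` and `ψ(π) = 1`, and `ẽ`
solves equation (1) with kernel `M̃` and `ẽ(0) = 1`, then
`∫₀^π ψ(x) ∫₀ˣ (M(x,t) − M̃(x,t)) ẽ(t) dt dx = i (ẽ(π) − ψ(0))`. -/
theorem stmt_7 (M Mt : ℝ → ℝ → ℂ)
    (hM : ContinuousOn (fun p : ℝ × ℝ => M p.1 p.2) Triangle)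
    (hMt : ContinuousOn (fun p : ℝ × ℝ => Mt p.1 p.2) Triangle)
    (lam : ℂ) (ψ ψ' et et' : ℝ → ℂ)
    (hψ : ∀ x ∈ Icc (0:ℝ) Real.pi,
      HasDerivWithinAt ψ (ψ' x) (Icc 0 Real.pi) x ∧
      -(Complex.I * ψ' x) + (∫ t in x..Real.pi, M t x * ψ t) = lam * ψ x)
    (hψπ : ψ Real.pi = 1)
    (het : ∀ x ∈ Icc (0:ℝ) Real.pi,
      HasDerivWithinAt et (et' x) (Icc 0 Real.pi) x ∧
      Complex.I * et' x + (∫ t in (0:ℝ)..x, Mt x t * et t) = lam * et x)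
    (het0 : et 0 = 1) :
    (∫ x in (0:ℝ)..Real.pi,
        ψ x * ∫ t in (0:ℝ)..x, (M x t - Mt x t) * et t)
      = Complex.I * (et Real.pi - ψ 0) := by
  have hπ : 0 ≤ π := pi_nonneg
  have hψc : ContinuousOn ψ (Icc 0 π) := fun x hx => (hψ x hx).1.continuousWithinAt
  have hetc : ContinuousOn et (Icc 0 π) := fun x hx => (het x hx).1.continuousWithinAt
  have hlag := lagrange_identity_volterra hπ hM (fun x hx => (hψ x hx).1)
    (continuousOn_deriv_of_adjoint_volterra hM hψc fun x hx => (hψ x hx).2)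
    (fun x hx => (het x hx).1)
    (continuousOn_deriv_of_volterra hMt hetc fun x hx => (het x hx).2)
  rw [hψπ, het0, one_mul, mul_one] at hlag
  rw [← hlag]
  refine intervalIntegral.integral_congr fun x hx => ?_
  rw [uIcc_of_le hπ] at hx
  have hsub : ∫ t in 0..x, (M x t - Mt x t) * et t
      = (∫ t in 0..x, M x t * et t) - ∫ t in 0..x, Mt x t * et t := by
    simp_rw [sub_mul]
    exact intervalIntegral.integral_sub
      (intervalIntegrable_of_continuousOn_lowerTriangle (hM.uncurry_mul_snd hetc) hx)
      (intervalIntegrable_of_continuousOn_lowerTriangle (hMt.uncurry_mul_snd hetc) hx)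
  rw [hsub, (hψ x hx).2]
  linear_combination (-ψ x) * (het x hx).2
end

section
/- Let B : [0,π] → ℂ be continuous with B(x) ≠ 0 for all x ∈ (0,π], let K be a complex-valued continuous function on the triangle {(x,t) : 0 ≤ t ≤ x ≤ π}, and let f : [0,π] → ℂ be continuous. If B(x)·f(π−x) + ∫ₓ^π K(t,x)·f(π−t) dt = 0 for all x ∈ [0,π], then f(x) = 0 for all x ∈ [0,π]. -/
/-!
Put `s = π - x`. The equation says `B (π - s) f s = -∫₀ˢ K (π - u) (π - s) f u du`. On `[0, x]`
with `x < π`, `‖B (π - s)‖` is bounded below by a positive constant, so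
`‖f s‖ ≤ C ∫₀ˢ ‖f‖`, and Gronwall's inequality (applied to the primitive of `‖f‖`) gives
`f = 0` on `[0, π)`; continuity gives `f π = 0`.
-/

open Complex MeasureTheory Set Real

open Topology intervalIntegral

theorem hasDerivWithinAt_integral_Ici {E : Type*} [NormedAddCommGroup E] [NormedSpace ℝ E]
    [CompleteSpace E] {φ : ℝ → E} {a b s : ℝ}
    (hφ : ContinuousOn φ (Icc a b)) (hs : s ∈ Ico a b) :
    HasDerivWithinAt (fun u => ∫ t in a..u, φ t) (φ s) (Ici s) s := by
  have hIcc : Icc a b ∈ 𝓝[>] s := Icc_mem_nhdsGT_of_mem hs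
  exact integral_hasDerivWithinAt_right
    ((hφ.mono (Icc_subset_Icc_right hs.2.le)).intervalIntegrable_of_Icc hs.1)
    ((hφ.stronglyMeasurableAtFilter_nhdsWithin measurableSet_Icc s).filter_mono
      (nhdsWithin_le_of_mem hIcc))
    ((hφ s (Ico_subset_Icc_self hs)).mono_of_mem_nhdsWithin hIcc)

theorem eqOn_zero_of_le_mul_integral {φ : ℝ → ℝ} {a b C : ℝ} (hφ : ContinuousOn φ (Icc a b))
    (hφ0 : ∀ s ∈ Icc a b, 0 ≤ φ s) (h : ∀ s ∈ Icc a b, φ s ≤ C * ∫ u in a..s, φ u) :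
    ∀ s ∈ Icc a b, φ s = 0 := by
  intro s hs
  have hab : a ≤ b := hs.1.trans hs.2
  set F : ℝ → ℝ := fun s => ∫ u in a..s, φ u
  have hF0 : ∀ s ∈ Icc a b, 0 ≤ F s := fun s hs =>
    integral_nonneg hs.1 fun u hu => hφ0 u ⟨hu.1, hu.2.trans hs.2⟩
  have hFcont : ContinuousOn F (Icc a b) := by
    simpa only [uIcc_of_le hab] using
      continuousOn_primitive_interval' (hφ.intervalIntegrable_of_Icc hab) left_mem_uIcc
  have hFs : ‖F s‖ ≤ 0 := by
    refine (norm_le_gronwallBound_of_norm_deriv_right_le hFcont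
      (fun x hx => hasDerivWithinAt_integral_Ici hφ hx) (by simp [F]) (fun x hx => ?_) s hs).trans
      (gronwallBound_ε0_δ0 C _).le
    have hx' := Ico_subset_Icc_self hx
    rw [Real.norm_of_nonneg (hφ0 x hx'), Real.norm_of_nonneg (hF0 x hx'), add_zero]
    exact h x hx'
  have hφs : φ s ≤ C * F s := h s hs
  rw [norm_le_zero_iff.mp hFs, mul_zero] at hφs
  exact hφs.antisymm (hφ0 s hs)

theorem isCompact_triangle : IsCompact Triangle := by
  refine (isCompact_Icc (a := ((0 : ℝ), (0 : ℝ))) (b := (π, π))).of_isClosed_subset ?_ ?_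
  · exact (isClosed_le continuous_const continuous_snd).inter
      ((isClosed_le continuous_snd continuous_fst).inter
        (isClosed_le continuous_fst continuous_const))
  · rintro ⟨x, t⟩ ⟨h0t, htx, hxπ⟩
    exact ⟨⟨h0t.trans htx, h0t⟩, hxπ, htx.trans hxπ⟩

theorem norm_integral_kernel_le {K : ℝ → ℝ → ℂ} {f : ℝ → ℂ} {M y : ℝ}
    (hM : ∀ p ∈ Triangle, ‖K p.1 p.2‖ ≤ M) (hf : ContinuousOn f (Icc 0 π)) (hy : y ∈ Icc 0 π) :
    ‖∫ t in y..π, K t y * f (π - t)‖ ≤ M * ∫ u in 0..π - y, ‖f u‖ := by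
  have hfr : ContinuousOn (fun t => ‖f (π - t)‖) (Icc y π) :=
    (hf.comp (by fun_prop) fun t ht => ⟨by linarith [ht.2], by linarith [ht.1, hy.1]⟩).norm
  calc ‖∫ t in y..π, K t y * f (π - t)‖
      ≤ ∫ t in y..π, M * ‖f (π - t)‖ := by
        refine norm_integral_le_of_norm_le hy.2 (ae_of_all _ fun t ht => ?_)
          ((hfr.const_smul M).intervalIntegrable_of_Icc hy.2)
        rw [norm_mul]
        exact mul_le_mul_of_nonneg_right (hM (t, y) ⟨hy.1, ht.1.le, ht.2⟩) (norm_nonneg _)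
    _ = M * ∫ u in 0..π - y, ‖f u‖ := by
        rw [intervalIntegral.integral_const_mul, integral_comp_sub_left (fun u => ‖f u‖), sub_self]

theorem norm_mul_norm_le_integral_of_volterra {B : ℝ → ℂ} {K : ℝ → ℝ → ℂ} {f : ℝ → ℂ} {M : ℝ}
    (hM : ∀ p ∈ Triangle, ‖K p.1 p.2‖ ≤ M) (hf : ContinuousOn f (Icc 0 π))
    (heq : ∀ x ∈ Icc (0:ℝ) π, B x * f (π - x) + (∫ t in x..π, K t x * f (π - t)) = 0)
    {s : ℝ} (hs : s ∈ Icc 0 π) :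
    ‖B (π - s)‖ * ‖f s‖ ≤ M * ∫ u in 0..s, ‖f u‖ := by
  have hy : π - s ∈ Icc 0 π := ⟨by linarith [hs.2], by linarith [hs.1]⟩
  have h := heq (π - s) hy
  rw [sub_sub_cancel, add_eq_zero_iff_eq_neg] at h
  rw [← norm_mul, h, norm_neg]
  simpa only [sub_sub_cancel] using norm_integral_kernel_le hM hf hy

theorem eqOn_zero_Ico_of_volterra {B : ℝ → ℂ} {K : ℝ → ℝ → ℂ} {f : ℝ → ℂ} {M : ℝ}
    (hB : ContinuousOn B (Icc 0 π)) (hB0 : ∀ x ∈ Ioc (0:ℝ) π, B x ≠ 0)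
    (hM : ∀ p ∈ Triangle, ‖K p.1 p.2‖ ≤ M) (hf : ContinuousOn f (Icc 0 π))
    (heq : ∀ x ∈ Icc (0:ℝ) π, B x * f (π - x) + (∫ t in x..π, K t x * f (π - t)) = 0) :
    EqOn f 0 (Ico 0 π) := by
  intro x hx
  obtain ⟨z, hz, hzmin⟩ := (isCompact_Icc (a := π - x) (b := π)).exists_isMinOn
    (nonempty_Icc.2 (by linarith [hx.1]))
    ((hB.mono (Icc_subset_Icc (by linarith [hx.2]) le_rfl)).norm)
  have hb : 0 < ‖B z‖ := norm_pos_iff.2 (hB0 z ⟨by linarith [hz.1, hx.2], hz.2⟩)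
  refine norm_eq_zero.1 (eqOn_zero_of_le_mul_integral (C := M / ‖B z‖)
    (hf.mono (Icc_subset_Icc_right hx.2.le)).norm (fun _ _ => norm_nonneg _) (fun s hs => ?_)
    x ⟨hx.1, le_rfl⟩)
  have hBs : ‖B z‖ ≤ ‖B (π - s)‖ := hzmin ⟨by linarith [hs.2], by linarith [hs.1]⟩
  rw [div_mul_eq_mul_div, le_div_iff₀ hb]
  calc ‖f s‖ * ‖B z‖ ≤ ‖B (π - s)‖ * ‖f s‖ := by rw [mul_comm]; gcongr
    _ ≤ M * ∫ u in 0..s, ‖f u‖ :=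
      norm_mul_norm_le_integral_of_volterra hM hf heq ⟨hs.1, hs.2.trans hx.2.le⟩

/-- A Volterra-type homogeneous equation
`B(x) f(π−x) + ∫ₓ^π K(t,x) f(π−t) dt = 0` on `[0,π]` with continuous `B`
nonvanishing on `(0,π]` and continuous `K` forces `f ≡ 0` on `[0,π]`. -/
theorem stmt_13 (B : ℝ → ℂ) (hB : ContinuousOn B (Icc 0 Real.pi))
    (hB0 : ∀ x ∈ Ioc (0:ℝ) Real.pi, B x ≠ 0)
    (K : ℝ → ℝ → ℂ)
    (hK : ContinuousOn (fun p : ℝ × ℝ => K p.1 p.2) Triangle)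
    (f : ℝ → ℂ) (hf : ContinuousOn f (Icc 0 Real.pi))
    (heq : ∀ x ∈ Icc (0:ℝ) Real.pi,
      B x * f (Real.pi - x) + (∫ t in x..Real.pi, K t x * f (Real.pi - t)) = 0) :
    ∀ x ∈ Icc (0:ℝ) Real.pi, f x = 0 := by
  obtain ⟨M, hM⟩ := isCompact_triangle.exists_bound_of_continuousOn hK
  have hIco : EqOn f 0 (Ico 0 π) := eqOn_zero_Ico_of_volterra hB hB0 hM hf heq
  refine fun x hx => hIco.of_subset_closure hf continuousOn_const Ico_subset_Icc_self ?_ hx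
  rw [closure_Ico pi_pos.ne]
end
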